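/- The Kubo–Ando geometric mean tensorizes: for positive definite operators A₀, A₁ on H_A and B₀, B₁ on H_B, ω(A₀ ⊗ B₀, A₁ ⊗ B₁) = ω(A₀, A₁) ⊗ ω(B₀, B₁), where ω(X,Y) := X^{1/2} (X^{-1/2} Y X^{-1/2})^{1/2} X^{1/2}. In particular ω(ρ̃₀ ⊗ ρ̃₁, ρ̃₁ ⊗ ρ̃₀) = ω(ρ̃₀, ρ̃₁) ⊗ ω(ρ̃₁, ρ̃₀) for positive definite density operators ρ̃₀, ρ̃₁. -/

import Mathlib

open Matrix
open scoped ComplexOrder Kronecker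

/-- The positive semidefinite square root of a positive semidefinite matrix
(the definition `Matrix.PosSemidef.sqrt` of the older Mathlib, which has since been removed). -/
noncomputable def Matrix.PosSemidef.sqrt {n 𝕜 : Type*} [Fintype n] [DecidableEq n] [RCLike 𝕜]
    {A : Matrix n n 𝕜} (hA : A.PosSemidef) : Matrix n n 𝕜 :=
  hA.isHermitian.eigenvectorUnitary.1 * diagonal ((↑) ∘ (√·) ∘ hA.isHermitian.eigenvalues) *
  (star hA.isHermitian.eigenvectorUnitary : Matrix n n 𝕜)

open scoped MatrixOrder in
lemma Matrix.PosSemidef.sqrt_eq_cfcSqrt {n : Type*} [Fintype n] [DecidableEq n]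
    {A : Matrix n n ℂ} (hA : A.PosSemidef) : hA.sqrt = CFC.sqrt A := by
  rw [CFC.sqrt_eq_real_sqrt A hA.nonneg, cfcₙ_eq_cfc, hA.isHermitian.cfc_eq,
    Matrix.IsHermitian.cfc, Unitary.conjStarAlgAut_apply]
  rfl

open scoped MatrixOrder in
lemma Matrix.PosSemidef.posSemidef_sqrt {n : Type*} [Fintype n] [DecidableEq n]
    {A : Matrix n n ℂ} (hA : A.PosSemidef) : hA.sqrt.PosSemidef := by
  rw [hA.sqrt_eq_cfcSqrt]
  exact (CFC.sqrt_nonneg A).posSemidef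

open scoped MatrixOrder in
lemma Matrix.PosSemidef.sqrt_mul_self {n : Type*} [Fintype n] [DecidableEq n]
    {A : Matrix n n ℂ} (hA : A.PosSemidef) : hA.sqrt * hA.sqrt = A := by
  rw [hA.sqrt_eq_cfcSqrt]
  exact CFC.sqrt_mul_sqrt_self A hA.nonneg

open scoped MatrixOrder in
lemma Matrix.PosSemidef.eq_sqrt_of_sq_eq {n : Type*} [Fintype n] [DecidableEq n]
    {A : Matrix n n ℂ} (hA : A.PosSemidef) {B : Matrix n n ℂ} (hB : B.PosSemidef)
    (hAB : A ^ 2 = B) : A = hB.sqrt := by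
  rw [hB.sqrt_eq_cfcSqrt]
  exact (CFC.sqrt_unique (by rw [← sq]; exact hAB) hA.nonneg).symm

open scoped MatrixOrder in
lemma posSemidef_iff_eq_transpose_mul_self {n : Type*} [Fintype n] [DecidableEq n]
    {A : Matrix n n ℂ} : A.PosSemidef ↔ ∃ B : Matrix n n ℂ, A = Bᴴ * B := by
  refine ⟨fun hA => ⟨CFC.sqrt A, ?_⟩, fun ⟨B, hB⟩ => hB ▸ posSemidef_conjTranspose_mul_self B⟩
  rw [← star_eq_conjTranspose, (CFC.sqrt_nonneg A).isSelfAdjoint.star_eq,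
    CFC.sqrt_mul_sqrt_self A hA.nonneg]

lemma kron_conjTranspose {m n : Type*} (A : Matrix m m ℂ) (B : Matrix n n ℂ) :
    (A ⊗ₖ B)ᴴ = Aᴴ ⊗ₖ Bᴴ := by
  ext ⟨i, j⟩ ⟨k, l⟩
  simp [conjTranspose_apply, kroneckerMap_apply]

lemma posSemidef_kron {m n : Type*} [Fintype m] [Fintype n] [DecidableEq m] [DecidableEq n]
    {A : Matrix m m ℂ} {B : Matrix n n ℂ} (hA : A.PosSemidef) (hB : B.PosSemidef) :
    (A ⊗ₖ B).PosSemidef := by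
  obtain ⟨C, rfl⟩ := posSemidef_iff_eq_transpose_mul_self.mp hA
  obtain ⟨D, rfl⟩ := posSemidef_iff_eq_transpose_mul_self.mp hB
  rw [mul_kronecker_mul, ← kron_conjTranspose]
  exact posSemidef_conjTranspose_mul_self _

lemma sqrt_kron {m n : Type*} [Fintype m] [Fintype n] [DecidableEq m] [DecidableEq n]
    {A : Matrix m m ℂ} {B : Matrix n n ℂ} (hA : A.PosSemidef) (hB : B.PosSemidef)
    (h : (A ⊗ₖ B).PosSemidef) :
    h.sqrt = hA.sqrt ⊗ₖ hB.sqrt := by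
  refine ((posSemidef_kron hA.posSemidef_sqrt hB.posSemidef_sqrt).eq_sqrt_of_sq_eq h ?_).symm
  rw [pow_two, ← mul_kronecker_mul, hA.sqrt_mul_self, hB.sqrt_mul_self]

lemma sqrt_congr {m : Type*} [Fintype m] [DecidableEq m] {M N : Matrix m m ℂ}
    (h : M = N) (hM : M.PosSemidef) (hN : N.PosSemidef) : hM.sqrt = hN.sqrt := by
  subst h; rfl

/-- The Kubo–Ando geometric mean `ω(X,Y) = X^{1/2} (X^{-1/2} Y X^{-1/2})^{1/2} X^{1/2}`
for `X` positive definite and `Y` positive semidefinite, with `X^{-1/2}` realized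
as the inverse of the positive square root of `X`. -/
noncomputable def kuboAndoGeomMean {m : Type*} [Fintype m] [DecidableEq m]
    (X Y : Matrix m m ℂ) (hX : X.PosDef) (hY : Y.PosSemidef) : Matrix m m ℂ :=
  hX.posSemidef.sqrt *
    ((hY.mul_mul_conjTranspose_same (hX.posSemidef.sqrt⁻¹)).sqrt) *
    hX.posSemidef.sqrt

/-- the Kubo–Ando geometric mean tensorizes:
`ω(A₀ ⊗ B₀, A₁ ⊗ B₁) = ω(A₀, A₁) ⊗ ω(B₀, B₁)` for positive definite operators.
(The positive definiteness of the Kronecker products, which always holds, is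
recorded as hypotheses `hP`, `hQ`.) -/
theorem kuboAndoGeomMean_kronecker {dA dB : ℕ}
    (A₀ A₁ : Matrix (Fin dA) (Fin dA) ℂ) (B₀ B₁ : Matrix (Fin dB) (Fin dB) ℂ)
    (hA₀ : A₀.PosDef) (hA₁ : A₁.PosDef) (hB₀ : B₀.PosDef) (hB₁ : B₁.PosDef)
    (hP : (A₀ ⊗ₖ B₀).PosDef) (hQ : (A₁ ⊗ₖ B₁).PosDef) :
    kuboAndoGeomMean (A₀ ⊗ₖ B₀) (A₁ ⊗ₖ B₁) hP hQ.posSemidef =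
      kuboAndoGeomMean A₀ A₁ hA₀ hA₁.posSemidef ⊗ₖ
        kuboAndoGeomMean B₀ B₁ hB₀ hB₁.posSemidef := by
  unfold kuboAndoGeomMean
  have h1 : hP.posSemidef.sqrt = hA₀.posSemidef.sqrt ⊗ₖ hB₀.posSemidef.sqrt :=
    sqrt_kron hA₀.posSemidef hB₀.posSemidef hP.posSemidef
  have h2 : hP.posSemidef.sqrt⁻¹ * (A₁ ⊗ₖ B₁) * (hP.posSemidef.sqrt⁻¹)ᴴ =
      (hA₀.posSemidef.sqrt⁻¹ * A₁ * (hA₀.posSemidef.sqrt⁻¹)ᴴ) ⊗ₖ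
      (hB₀.posSemidef.sqrt⁻¹ * B₁ * (hB₀.posSemidef.sqrt⁻¹)ᴴ) := by
    rw [h1, inv_kronecker, kron_conjTranspose, ← mul_kronecker_mul, ← mul_kronecker_mul]
  have hmidA := hA₁.posSemidef.mul_mul_conjTranspose_same (hA₀.posSemidef.sqrt⁻¹)
  have hmidB := hB₁.posSemidef.mul_mul_conjTranspose_same (hB₀.posSemidef.sqrt⁻¹)
  have h3 : (hQ.posSemidef.mul_mul_conjTranspose_same (hP.posSemidef.sqrt⁻¹)).sqrt =
      hmidA.sqrt ⊗ₖ hmidB.sqrt := by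
    rw [sqrt_congr h2 _ (posSemidef_kron hmidA hmidB)]
    exact sqrt_kron hmidA hmidB _
  rw [h3, h1, ← mul_kronecker_mul, ← mul_kronecker_mul]
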